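/- arXiv:0704.3785 — 2 statements merged into one kernel-verified Lean document; each statement's English description precedes it below -/
import Mathlib

section
/- Let μ be a Radon measure on ℝ^m with support Σ, K ⊆ Σ compact, n a positive integer, α > 0, and C_K > 0. Suppose |μ(B(x,tr))/μ(B(x,r)) − t^n| ≤ C_K r^α for all r ∈ (0,1], t ∈ [1/2,1], and x ∈ K. Then there is a constant C depending only on n such that |μ(B(x,τr))/μ(B(x,r)) − τ^n| ≤ C·C_K r^α for all r ∈ (0,1], all τ ∈ (0,1], and all x ∈ K. -/
open MeasureTheory Metric Set

/-! Write `τ = s · 2⁻ᵏ` with `s ∈ [1/2, 1]`. The hypothesis at `t = 1/2` on the dyadic scales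
`2⁻ʲ r` controls each factor of the telescoping product `μ(B(x, 2⁻ᵏ r)) / μ(B(x, r))` up to the
error `ε = C_K r^α`; since `2⁻ⁿ ≤ 1/2`, the accumulated error stays below `2ε`. One more
application of the hypothesis at scale `2⁻ᵏ r` with `t = s` gives the bound with `C = 3`. -/

lemma abs_mul_sub_mul_le {x y u v ε δ c : ℝ} (hy₀ : 0 ≤ y) (hy₁ : y ≤ 1) (hu₀ : 0 ≤ u)
    (hu : u ≤ c) (hx : |x - u| ≤ ε) (hyv : |y - v| ≤ δ) :
    |x * y - u * v| ≤ ε + c * δ := by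
  have hε : 0 ≤ ε := (abs_nonneg _).trans hx
  calc |x * y - u * v| = |(x - u) * y + u * (y - v)| := by ring_nf
    _ ≤ |x - u| * y + u * |y - v| := by
        refine (abs_add_le _ _).trans_eq ?_
        rw [abs_mul, abs_mul, abs_of_nonneg hy₀, abs_of_nonneg hu₀]
    _ ≤ ε * 1 + c * δ := by gcongr; exact hu₀.trans hu
    _ = ε + c * δ := by rw [mul_one]

lemma abs_div_sub_pow_le_of_abs_div_succ_sub_le {g : ℕ → ℝ} {D ε : ℝ} (hg : ∀ k, 0 < g k)
    (hg₀ : ∀ k, g k ≤ g 0) (hD₀ : 0 ≤ D) (hD : D ≤ 1 / 2)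
    (hstep : ∀ k, |g (k + 1) / g k - D| ≤ ε) (k : ℕ) :
    |g k / g 0 - D ^ k| ≤ 2 * ε := by
  induction k with
  | zero =>
    have hε : 0 ≤ ε := (abs_nonneg _).trans (hstep 0)
    simp [div_self (hg 0).ne', hε]
  | succ k ih =>
    have hsplit : g (k + 1) / g 0 = g (k + 1) / g k * (g k / g 0) :=
      (div_mul_div_cancel₀ (hg k).ne').symm
    calc |g (k + 1) / g 0 - D ^ (k + 1)| = |g (k + 1) / g k * (g k / g 0) - D * D ^ k| := by
          rw [hsplit, pow_succ', mul_comm D]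
      _ ≤ ε + 1 / 2 * (2 * ε) :=
          abs_mul_sub_mul_le (div_nonneg (hg k).le (hg 0).le)
            ((div_le_one (hg 0)).2 (hg₀ k)) hD₀ hD (hstep k) ih
      _ = 2 * ε := by ring

lemma exists_eq_mul_half_pow {τ : ℝ} (hτ₀ : 0 < τ) (hτ₁ : τ ≤ 1) :
    ∃ k : ℕ, ∃ s ∈ Icc (1 / 2 : ℝ) 1, τ = s * (1 / 2) ^ k := by
  obtain ⟨k, hk₁, hk₂⟩ := exists_nat_pow_near_of_lt_one hτ₀ hτ₁
    (by norm_num : (0 : ℝ) < 1 / 2) (by norm_num : (1 / 2 : ℝ) < 1)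
  have hpos : (0 : ℝ) < (1 / 2) ^ k := by positivity
  refine ⟨k, τ / (1 / 2) ^ k, ⟨?_, ?_⟩, by field_simp⟩
  · rw [le_div_iff₀ hpos, ← pow_succ']
    exact hk₁.le
  · rwa [div_le_one hpos]

section DyadicIteration

variable {F : ℝ → ℝ} {n : ℕ} {r ε : ℝ}

lemma abs_div_sub_pow_half_pow_le (hF : Monotone F) (hpos : ∀ s, 0 < s → 0 < F s)
    (hn : 0 < n) (hr : 0 < r)
    (hH : ∀ ρ ∈ Ioc 0 r, ∀ t ∈ Icc (1 / 2 : ℝ) 1, |F (t * ρ) / F ρ - t ^ n| ≤ ε) (k : ℕ) :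
    |F ((1 / 2) ^ k * r) / F r - ((1 / 2) ^ n) ^ k| ≤ 2 * ε := by
  have hscale : ∀ j : ℕ, (1 / 2 : ℝ) ^ j * r ≤ r := fun j =>
    mul_le_of_le_one_left hr.le (pow_le_one₀ (by norm_num) (by norm_num))
  have hstep : ∀ j : ℕ,
      |F ((1 / 2) ^ (j + 1) * r) / F ((1 / 2) ^ j * r) - (1 / 2) ^ n| ≤ ε := fun j => by
    simpa [pow_succ', mul_assoc] using
      hH _ ⟨by positivity, hscale j⟩ (1 / 2) ⟨le_rfl, by norm_num⟩
  simpa using abs_div_sub_pow_le_of_abs_div_succ_sub_le (g := fun j => F ((1 / 2) ^ j * r))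
    (fun j => hpos _ (by positivity)) (fun j => by simpa using hF (hscale j)) (by positivity)
    (pow_le_of_le_one (by norm_num) (by norm_num) hn.ne') hstep k

lemma abs_div_sub_pow_le_three_mul (hF : Monotone F) (hpos : ∀ s, 0 < s → 0 < F s)
    (hn : 0 < n) (hr : 0 < r)
    (hH : ∀ ρ ∈ Ioc 0 r, ∀ t ∈ Icc (1 / 2 : ℝ) 1, |F (t * ρ) / F ρ - t ^ n| ≤ ε)
    {τ : ℝ} (hτ₀ : 0 < τ) (hτ₁ : τ ≤ 1) :
    |F (τ * r) / F r - τ ^ n| ≤ 3 * ε := by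
  obtain ⟨k, s, hs, rfl⟩ := exists_eq_mul_half_pow hτ₀ hτ₁
  have hρ : (1 / 2 : ℝ) ^ k * r ∈ Ioc 0 r :=
    ⟨by positivity, mul_le_of_le_one_left hr.le (pow_le_one₀ (by norm_num) (by norm_num))⟩
  have hFρ : 0 < F ((1 / 2) ^ k * r) := hpos _ hρ.1
  have hFr : 0 < F r := hpos r hr
  have hsplit : F (s * (1 / 2) ^ k * r) / F r
      = F (s * ((1 / 2) ^ k * r)) / F ((1 / 2) ^ k * r) * (F ((1 / 2) ^ k * r) / F r) := by
    rw [div_mul_div_cancel₀ hFρ.ne', mul_assoc]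
  calc |F (s * (1 / 2) ^ k * r) / F r - (s * (1 / 2) ^ k) ^ n|
      = |F (s * ((1 / 2) ^ k * r)) / F ((1 / 2) ^ k * r) * (F ((1 / 2) ^ k * r) / F r)
          - s ^ n * ((1 / 2) ^ n) ^ k| := by rw [hsplit, mul_pow, ← pow_mul, ← pow_mul, mul_comm k]
    _ ≤ ε + 1 * (2 * ε) :=
        abs_mul_sub_mul_le (div_nonneg hFρ.le hFr.le) ((div_le_one hFr).2 (hF hρ.2))
          (by have := hs.1; positivity) (pow_le_one₀ (by linarith [hs.1]) hs.2) (hH _ hρ s hs)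
          (abs_div_sub_pow_half_pow_le hF hpos hn hr hH k)
    _ = 3 * ε := by ring

end DyadicIteration

/-- iterating the Hölder-doubling condition from `t ∈ [1/2,1]`
to all `τ ∈ (0,1]`, with a constant depending only on `n`. -/
theorem stmt_0 (n : ℕ) (hn : 0 < n) :
    ∃ C : ℝ, 0 < C ∧
      ∀ (m : ℕ) (μ : Measure (EuclideanSpace ℝ (Fin m)))
        (K : Set (EuclideanSpace ℝ (Fin m))) (α CK : ℝ),
        0 < α → 0 < CK → IsCompact K →
        (∀ K' : Set (EuclideanSpace ℝ (Fin m)), IsCompact K' → μ K' < ⊤) →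
        (∀ x ∈ K, ∀ r > (0:ℝ), 0 < μ (ball x r)) →
        (∀ x ∈ K, ∀ r ∈ Set.Ioc (0:ℝ) 1, ∀ t ∈ Set.Icc (1/2:ℝ) 1,
          |(μ (ball x (t * r))).toReal / (μ (ball x r)).toReal - t ^ n| ≤ CK * r ^ α) →
        ∀ x ∈ K, ∀ r ∈ Set.Ioc (0:ℝ) 1, ∀ τ ∈ Set.Ioc (0:ℝ) 1,
          |(μ (ball x (τ * r))).toReal / (μ (ball x r)).toReal - τ ^ n| ≤ C * CK * r ^ α := by
  refine ⟨3, by norm_num, fun m μ K α CK hα hCK _ hfin hpos hH x hx r hr τ hτ => ?_⟩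
  have hball_ne_top : ∀ s, μ (ball x s) ≠ ⊤ := fun s =>
    ((measure_mono ball_subset_closedBall).trans_lt (hfin _ (isCompact_closedBall x s))).ne
  have hmono : Monotone fun s => (μ (ball x s)).toReal := fun s₁ s₂ hs =>
    ENNReal.toReal_mono (hball_ne_top s₂) (measure_mono (ball_subset_ball hs))
  have hF : ∀ s, 0 < s → 0 < (μ (ball x s)).toReal := fun s hs =>
    ENNReal.toReal_pos (hpos x hx s hs).ne' (hball_ne_top s)
  have hH' : ∀ ρ ∈ Ioc 0 r, ∀ t ∈ Icc (1 / 2 : ℝ) 1,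
      |(μ (ball x (t * ρ))).toReal / (μ (ball x ρ)).toReal - t ^ n| ≤ CK * r ^ α :=
    fun ρ hρ t ht => (hH x hx ρ ⟨hρ.1, hρ.2.trans hr.2⟩ t ht).trans <|
      mul_le_mul_of_nonneg_left (Real.rpow_le_rpow hρ.1.le hρ.2 hα.le) hCK.le
  simpa [mul_assoc] using abs_div_sub_pow_le_three_mul hmono hF hn hr.1 hH' hτ.1 hτ.2
end

section
/- Let μ be a Radon measure on ℝ^m supported on Σ, n a positive integer, α > 0. Suppose for every compact K ⊆ Σ there is C_K with |μ(B(x,tr))/μ(B(x,r)) − t^n| ≤ C_K r^α for x ∈ K and all t, r ∈ (0,1]. Then for every x ∈ Σ the density D(x) = lim_{r→0⁺} μ(B(x,r))/(ω_n r^n) exists and satisfies 0 < D(x) < ∞. -/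
/-!
Write `f r = μ(B(x,r)) / r ^ n`. The hypothesis with `t = s / r ∈ [1/2, 1]` gives
`f s / f r = 1 + O(r ^ α)` for `r / 2 ≤ s ≤ r`, so `log f` oscillates by `O(r ^ α)` on each
dyadic interval `[r / 2, r]`. These bounds decay geometrically along the scales
`r, r / 2, r / 4, …`, so `log f` is Cauchy as `r → 0⁺`, and `f` tends to the exponential of
its limit, which is positive.
-/

open MeasureTheory Metric

/-- `ω_n`: the Lebesgue measure of the unit ball in `ℝ^n`. -/
noncomputable def omegaBall (n : ℕ) : ℝ :=
  (MeasureTheory.volume (Metric.ball (0 : EuclideanSpace ℝ (Fin n)) 1)).toReal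

open Filter Topology Set

lemma tendsto_const_mul_rpow_nhdsGT_zero {α : ℝ} (hα : 0 < α) (c : ℝ) :
    Tendsto (fun r : ℝ => c * r ^ α) (𝓝[>] 0) (𝓝 0) := by
  have h := (Real.continuousAt_rpow_const 0 α (.inr hα.le)).tendsto.const_mul c
  rw [Real.zero_rpow hα.ne', mul_zero] at h
  exact h.mono_left nhdsWithin_le_nhds

section DyadicOscillation

variable {E : Type*} [PseudoMetricSpace E] {g : ℝ → E} {α K r₀ : ℝ}

lemma dist_le_of_dyadic_oscillation (hα : 0 < α)
    (hg : ∀ r s, 0 < r → r ≤ r₀ → r / 2 ≤ s → s ≤ r → dist (g s) (g r) ≤ K * r ^ α)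
    {r s : ℝ} (hs : 0 < s) (hsr : s ≤ r) (hr : r ≤ r₀) :
    dist (g s) (g r) ≤ K * (1 - 2⁻¹ ^ α)⁻¹ * r ^ α := by
  set ρ : ℝ := 2⁻¹ ^ α
  have hρ : ρ < 1 := Real.rpow_lt_one (by norm_num) (by norm_num) hα
  set G := (1 - ρ)⁻¹
  have hρ0 : 0 ≤ ρ := by positivity
  have hG : 1 + ρ * G = G := by
    have : (1 - ρ) * G = 1 := mul_inv_cancel₀ (sub_pos.2 hρ).ne'
    linarith
  have hG1 : 1 ≤ G := (one_le_inv₀ (sub_pos.2 hρ)).2 (by linarith)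
  have hK : 0 ≤ K := by
    have hr₀ : 0 < r₀ := hs.trans_le (hsr.trans hr)
    refine nonneg_of_mul_nonneg_left ?_ (Real.rpow_pos_of_pos hr₀ α)
    exact dist_nonneg.trans (hg r₀ r₀ hr₀ le_rfl (by linarith) le_rfl)
  -- `G = ∑ ρ ^ k` absorbs the errors accumulated along the halvings `r, r / 2, r / 4, …`
  have hdescend : ∀ k : ℕ, ∀ r, 0 < r → r ≤ r₀ → r * 2⁻¹ ^ k ≤ s → s ≤ r →
      dist (g s) (g r) ≤ K * G * r ^ α := by
    intro k
    induction k with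
    | zero =>
      intro r _ _ hrs hsr
      rw [le_antisymm hsr (by simpa using hrs), dist_self]
      positivity
    | succ k ih =>
      intro r hr hr₀ hrs hsr
      by_cases hhalf : r / 2 ≤ s
      · calc dist (g s) (g r) ≤ K * r ^ α := hg r s hr hr₀ hhalf hsr
          _ ≤ K * G * r ^ α := by
            rw [mul_right_comm]
            exact le_mul_of_one_le_right (by positivity) hG1
      · have hrec := ih (r / 2) (by positivity) (by linarith)
          (by rw [pow_succ] at hrs; linarith) (not_le.1 hhalf).le
        have hhalf_pow : (r / 2) ^ α = r ^ α * ρ := by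
          rw [div_eq_mul_inv, Real.mul_rpow hr.le (by norm_num)]
        rw [hhalf_pow] at hrec
        calc dist (g s) (g r) ≤ dist (g s) (g (r / 2)) + dist (g (r / 2)) (g r) :=
              dist_triangle _ _ _
          _ ≤ K * G * (r ^ α * ρ) + K * r ^ α :=
              add_le_add hrec (hg r (r / 2) hr hr₀ le_rfl (by linarith))
          _ = K * r ^ α * (1 + ρ * G) := by ring
          _ = K * G * r ^ α := by rw [hG]; ring
  have hr0 : 0 < r := hs.trans_le hsr
  obtain ⟨k, hk⟩ := exists_pow_lt_of_lt_one (div_pos hs hr0) (by norm_num : (2⁻¹ : ℝ) < 1)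
  exact hdescend k r hr0 hr (by rw [lt_div_iff₀ hr0] at hk; linarith) hsr

lemma exists_tendsto_nhdsGT_zero_of_dyadic_oscillation [CompleteSpace E] (hα : 0 < α)
    (hr₀ : 0 < r₀)
    (hg : ∀ r s, 0 < r → r ≤ r₀ → r / 2 ≤ s → s ≤ r → dist (g s) (g r) ≤ K * r ^ α) :
    ∃ L, Tendsto g (𝓝[>] 0) (𝓝 L) := by
  rw [← cauchy_map_iff_exists_tendsto, Metric.cauchy_iff]
  refine ⟨inferInstance, fun ε hε => ?_⟩
  have hsmall : ∀ᶠ δ in 𝓝[>] (0 : ℝ),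
      2 * (K * (1 - 2⁻¹ ^ α)⁻¹) * δ ^ α < ε ∧ δ ∈ Ioo 0 r₀ :=
    ((tendsto_const_mul_rpow_nhdsGT_zero hα _).eventually_lt_const hε).and
      (Ioo_mem_nhdsGT hr₀)
  obtain ⟨δ, hδε, hδ⟩ := hsmall.exists
  refine ⟨g '' Ioo 0 δ, image_mem_map (Ioo_mem_nhdsGT hδ.1), ?_⟩
  rintro _ ⟨s, hs, rfl⟩ _ ⟨s', hs', rfl⟩
  calc dist (g s) (g s') ≤ dist (g s) (g δ) + dist (g s') (g δ) :=
        dist_triangle_right _ _ _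
    _ ≤ K * (1 - 2⁻¹ ^ α)⁻¹ * δ ^ α + K * (1 - 2⁻¹ ^ α)⁻¹ * δ ^ α :=
      add_le_add (dist_le_of_dyadic_oscillation hα hg hs.1 hs.2.le hδ.2.le)
        (dist_le_of_dyadic_oscillation hα hg hs'.1 hs'.2.le hδ.2.le)
    _ < ε := by linarith

end DyadicOscillation

lemma abs_log_le_two_mul_abs_sub_one {u : ℝ} (hu : |u - 1| ≤ 1 / 2) :
    |Real.log u| ≤ 2 * |u - 1| := by
  have hu0 : 0 < u := by linarith [(abs_le.1 hu).1]
  rw [abs_le] at hu ⊢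
  rcases le_total u 1 with hu1 | hu1
  · rw [abs_of_nonpos (by linarith)]
    have hlog := Real.one_sub_inv_le_log_of_pos hu0
    have hinv : u⁻¹ ≤ 1 + 2 * (1 - u) := by
      rw [inv_le_iff_one_le_mul₀ hu0]; nlinarith
    constructor <;> linarith [Real.log_nonpos hu0.le hu1]
  · rw [abs_of_nonneg (by linarith)]
    constructor <;> linarith [Real.log_le_sub_one_of_pos hu0, Real.log_nonneg hu1]

section RatioBound

variable {A : ℝ → ℝ} {n : ℕ} {α C : ℝ}

lemma abs_div_pow_div_sub_one_le_of_abs_ratio_sub_pow_le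
    (hA : ∀ r ∈ Ioc (0 : ℝ) 1, 0 < A r)
    (hratio : ∀ t ∈ Ioc (0 : ℝ) 1, ∀ r ∈ Ioc (0 : ℝ) 1, |A (t * r) / A r - t ^ n| ≤ C * r ^ α)
    {r s : ℝ} (hr : 0 < r) (hr1 : r ≤ 1) (hs : r / 2 ≤ s) (hsr : s ≤ r) :
    |(A s / s ^ n) / (A r / r ^ n) - 1| ≤ 2 ^ n * C * r ^ α := by
  have hs0 : 0 < s := by linarith
  have ht : s / r ∈ Ioc (0 : ℝ) 1 := ⟨div_pos hs0 hr, div_le_one_of_le₀ hsr hr.le⟩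
  have htn : ((2 : ℝ) ^ n)⁻¹ ≤ (s / r) ^ n := by
    rw [← inv_pow]; gcongr; rw [le_div_iff₀ hr]; linarith
  have hratio_sr := hratio (s / r) ht r ⟨hr, hr1⟩
  rw [div_mul_cancel₀ s hr.ne'] at hratio_sr
  have hquot : (A s / s ^ n) / (A r / r ^ n) - 1 = (A s / A r - (s / r) ^ n) / (s / r) ^ n := by
    have := (hA r ⟨hr, hr1⟩).ne'
    simp only [div_pow]; field_simp
  rw [hquot, abs_div, abs_of_pos (pow_pos ht.1 n), div_le_iff₀ (pow_pos ht.1 n)]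
  calc |A s / A r - (s / r) ^ n| ≤ C * r ^ α := hratio_sr
    _ = 2 ^ n * C * r ^ α * ((2 : ℝ) ^ n)⁻¹ := by field_simp
    _ ≤ 2 ^ n * C * r ^ α * (s / r) ^ n := by
      have hC : 0 ≤ C * r ^ α := (abs_nonneg _).trans hratio_sr
      exact mul_le_mul_of_nonneg_left htn (by rw [mul_assoc]; positivity)

theorem exists_pos_tendsto_div_pow_of_abs_ratio_sub_pow_le (hα : 0 < α)
    (hA : ∀ r ∈ Ioc (0 : ℝ) 1, 0 < A r)
    (hratio : ∀ t ∈ Ioc (0 : ℝ) 1, ∀ r ∈ Ioc (0 : ℝ) 1, |A (t * r) / A r - t ^ n| ≤ C * r ^ α) :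
    ∃ D, 0 < D ∧ Tendsto (fun r => A r / r ^ n) (𝓝[>] 0) (𝓝 D) := by
  set f : ℝ → ℝ := fun r => A r / r ^ n
  have hf : ∀ r ∈ Ioc (0 : ℝ) 1, 0 < f r := fun r hr => div_pos (hA r hr) (pow_pos hr.1 n)
  have hC : 0 ≤ C := by
    simpa using (abs_nonneg _).trans (hratio 1 ⟨one_pos, le_rfl⟩ 1 ⟨one_pos, le_rfl⟩)
  obtain ⟨r₀, hr₀C, hr₀⟩ : ∃ r₀, 2 ^ n * C * r₀ ^ α ≤ 1 / 2 ∧ r₀ ∈ Ioc (0 : ℝ) 1 :=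
    (((tendsto_const_mul_rpow_nhdsGT_zero hα _).eventually_le_const (by norm_num)).and
      (Ioc_mem_nhdsGT one_pos)).exists
  have hlog : ∀ r s, 0 < r → r ≤ r₀ → r / 2 ≤ s → s ≤ r →
      dist (Real.log (f s)) (Real.log (f r)) ≤ 2 * (2 ^ n * C) * r ^ α := by
    intro r s hr hrr₀ hs hsr
    have hr1 : r ≤ 1 := hrr₀.trans hr₀.2
    have hrel : |f s / f r - 1| ≤ 2 ^ n * C * r ^ α :=
      abs_div_pow_div_sub_one_le_of_abs_ratio_sub_pow_le hA hratio hr hr1 hs hsr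
    have hsmall : 2 ^ n * C * r ^ α ≤ 1 / 2 := le_trans (by gcongr) hr₀C
    rw [Real.dist_eq, ← Real.log_div (hf s ⟨by linarith, by linarith⟩).ne' (hf r ⟨hr, hr1⟩).ne']
    calc |Real.log (f s / f r)| ≤ 2 * |f s / f r - 1| :=
          abs_log_le_two_mul_abs_sub_one (hrel.trans hsmall)
      _ ≤ 2 * (2 ^ n * C) * r ^ α := by linarith
  obtain ⟨L, hL⟩ := exists_tendsto_nhdsGT_zero_of_dyadic_oscillation hα hr₀.1 hlog
  refine ⟨Real.exp L, Real.exp_pos L, ((Real.continuous_exp.tendsto L).comp hL).congr' ?_⟩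
  filter_upwards [Ioc_mem_nhdsGT one_pos] with r hr using Real.exp_log (hf r hr)

end RatioBound

lemma omegaBall_pos (n : ℕ) : 0 < omegaBall n :=
  ENNReal.toReal_pos (measure_ball_pos _ _ one_pos).ne' measure_ball_lt_top.ne

theorem stmt_1_general (m n : ℕ) (α : ℝ) (hα : 0 < α)
    (μ : Measure (EuclideanSpace ℝ (Fin m))) [IsLocallyFiniteMeasure μ]
    (S : Set (EuclideanSpace ℝ (Fin m)))
    (hS : S = {x | ∀ r > (0:ℝ), 0 < μ (ball x r)})
    (h : ∀ K ⊆ S, IsCompact K → ∃ CK : ℝ,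
      ∀ x ∈ K, ∀ t ∈ Set.Ioc (0:ℝ) 1, ∀ r ∈ Set.Ioc (0:ℝ) 1,
        |(μ (ball x (t * r))).toReal / (μ (ball x r)).toReal - t ^ n| ≤ CK * r ^ α) :
    ∀ x ∈ S, ∃ D : ℝ, 0 < D ∧
      Filter.Tendsto (fun r : ℝ => (μ (ball x r)).toReal / (omegaBall n * r ^ n))
        (nhdsWithin 0 (Set.Ioi 0)) (nhds D) := by
  intro x hxS
  obtain ⟨C, hC⟩ := h {x} (singleton_subset_iff.2 hxS) isCompact_singleton
  have hx : ∀ r > (0 : ℝ), 0 < μ (ball x r) := by rw [hS] at hxS; exact hxS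
  obtain ⟨D, hD, hlim⟩ := exists_pos_tendsto_div_pow_of_abs_ratio_sub_pow_le hα
    (fun r hr => ENNReal.toReal_pos (hx r hr.1).ne' measure_ball_lt_top.ne) (hC x rfl)
  refine ⟨D / omegaBall n, div_pos hD (omegaBall_pos n), ?_⟩
  simpa only [mul_comm (omegaBall n), ← div_div] using hlim.div_const (omegaBall n)

/-- existence and positivity/finiteness of the density
`D(x) = lim_{r→0⁺} μ(B(x,r))/(ω_n r^n)` at every point of the support. -/
theorem stmt_1 (m n : ℕ) (hn : 0 < n) (α : ℝ) (hα : 0 < α)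
    (μ : Measure (EuclideanSpace ℝ (Fin m))) [IsLocallyFiniteMeasure μ]
    (S : Set (EuclideanSpace ℝ (Fin m)))
    (hS : S = {x | ∀ r > (0:ℝ), 0 < μ (ball x r)})
    (h : ∀ K ⊆ S, IsCompact K → ∃ CK : ℝ,
      ∀ x ∈ K, ∀ t ∈ Set.Ioc (0:ℝ) 1, ∀ r ∈ Set.Ioc (0:ℝ) 1,
        |(μ (ball x (t * r))).toReal / (μ (ball x r)).toReal - t ^ n| ≤ CK * r ^ α) :
    ∀ x ∈ S, ∃ D : ℝ, 0 < D ∧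
      Filter.Tendsto (fun r : ℝ => (μ (ball x r)).toReal / (omegaBall n * r ^ n))
        (nhdsWithin 0 (Set.Ioi 0)) (nhds D) :=
  stmt_1_general m n α hα μ S hS h
end
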